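/- arXiv:math/0605167 — 5 statements merged into one kernel-verified Lean document; each statement's English description precedes it below -/
import Mathlib

section
/- Let p be an odd prime such that (p−1)/2 is odd (equivalently p ≡ 3 mod 4). Then the Bernoulli number B_{(p+1)/2} is not congruent to 0 modulo p, i.e., p does not divide the numerator of B_{(p+1)/2}. -/
/-!
Write `n = (p + 1) / 2`. By von Staudt–Clausen the `B_i` with `i < p - 1` are `p`-integral, so
Faulhaber's formula gives `p B_n ≡ ∑_{a < p} a ^ n (mod p²)`. The numbers `2a` with `a < p` are
the even `b < p` together with `c + p` for the odd `c < p`; expanding `(c + p) ^ n` to first order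
gives `(2 ^ n - 1) ∑_{a < p} a ^ n ≡ n p ∑_{c < p odd} c ^ (n - 1) (mod p²)`, hence
`(2 ^ n - 1) B_n ≡ n ∑_{c < p odd} c ^ ((p - 1) / 2) (mod p)`. By Euler's criterion every term on
the right is `±1`, and there are `(p - 1) / 2` of them, an odd number smaller than `p`; so the right
side is a unit mod `p`, and `B_n` cannot be divisible by `p`.
-/

open Finset

theorem ZMod.sum_ne_zero_of_forall_eq_one_or_eq_neg_one {n : ℕ} {ι : Type*} {s : Finset ι}
    {f : ι → ZMod n} (hf : ∀ i ∈ s, f i = 1 ∨ f i = -1) (hodd : Odd #s) (hlt : #s < n) :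
    ∑ i ∈ s, f i ≠ 0 := by
  classical
  set m := #{i ∈ s | f i ≠ 1}
  have hsum : ∑ i ∈ s, f i = ((#s - 2 * m : ℤ) : ZMod n) := by
    have hcard := card_filter_add_card_filter_not (s := s) (fun i => f i ≠ 1)
    rw [← sum_filter_add_sum_filter_not s (fun i => f i ≠ 1),
      sum_congr rfl fun i hi => (hf i (mem_filter.1 hi).1).resolve_left (mem_filter.1 hi).2,
      sum_congr rfl fun i hi => (not_not.1 (mem_filter.1 hi).2)]
    simp only [sum_const, nsmul_eq_mul, mul_neg, mul_one]
    rw [← hcard]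
    push_cast
    ring
  have hm : m ≤ #s := card_filter_le _ _
  rw [hsum, Ne, ZMod.intCast_zmod_eq_zero_iff_dvd]
  intro hdvd
  have h0 := Int.eq_zero_of_abs_lt_dvd hdvd (by rw [abs_lt]; omega)
  obtain ⟨j, hj⟩ := hodd
  omega

theorem Finset.sum_range_two_mul {M : Type*} [AddCommMonoid M] {p : ℕ} (hp : Odd p)
    (f : ℕ → M) :
    ∑ a ∈ range p, f (2 * a) =
      ∑ b ∈ range p with Even b, f b + ∑ c ∈ range p with Odd c, f (c + p) := by
  have hp2 := Nat.odd_iff.1 hp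
  simp_rw [← Nat.not_even_iff_odd, ← sum_ite]
  refine sum_nbij' (fun a => if 2 * a < p then 2 * a else 2 * a - p)
    (fun b => if Even b then b / 2 else (b + p) / 2) ?_ ?_ ?_ ?_ fun a _ => ?_
  all_goals simp only [mem_range, Nat.even_iff]
  any_goals intros; split_ifs <;> omega
  split_ifs <;> first | rfl | omega | congr 1; omega

theorem sq_dvd_two_pow_sub_one_mul_sum_range_pow {p : ℕ} (hp : Odd p) (e : ℕ) :
    (p : ℤ) ^ 2 ∣ (2 ^ e - 1) * ∑ a ∈ range p, (a : ℤ) ^ e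
      - e * p * ∑ c ∈ range p with Odd c, (c : ℤ) ^ (e - 1) := by
  have hdouble : 2 ^ e * ∑ a ∈ range p, (a : ℤ) ^ e =
      ∑ b ∈ range p with Even b, (b : ℤ) ^ e +
        ∑ c ∈ range p with Odd c, ((c : ℤ) + p) ^ e := by
    simpa [mul_sum, mul_pow] using sum_range_two_mul hp fun b => (b : ℤ) ^ e
  have hsplit : ∑ a ∈ range p, (a : ℤ) ^ e =
      ∑ b ∈ range p with Even b, (b : ℤ) ^ e +
        ∑ c ∈ range p with Odd c, (c : ℤ) ^ e := by
    simp_rw [← sum_filter_add_sum_filter_not (range p) Even, Nat.not_even_iff_odd]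
  have hdiff : (2 ^ e - 1) * ∑ a ∈ range p, (a : ℤ) ^ e
      - e * p * ∑ c ∈ range p with Odd c, (c : ℤ) ^ (e - 1) =
      ∑ c ∈ range p with Odd c, (((c : ℤ) + p) ^ e - c ^ (e - 1) * p * e - c ^ e) := by
    have hlin : ∑ c ∈ range p with Odd c, (c : ℤ) ^ (e - 1) * p * e =
        e * p * ∑ c ∈ range p with Odd c, (c : ℤ) ^ (e - 1) := by
      rw [mul_sum]; exact sum_congr rfl fun _ _ => by ring
    rw [sum_sub_distrib, sum_sub_distrib, hlin, sub_one_mul, hdouble, hsplit]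
    ring
  rw [hdiff]
  exact dvd_sum fun c _ => sq_dvd_add_pow_sub_sub _ _ _

theorem not_dvd_sum_range_odd_pow {p : ℕ} [hp : Fact p.Prime] (h : Odd ((p - 1) / 2)) :
    ¬ (p : ℤ) ∣ ∑ c ∈ range p with Odd c, (c : ℤ) ^ ((p - 1) / 2) := by
  have hp2 : p % 2 = 1 := Nat.odd_iff.1 <| hp.out.odd_of_ne_two <| by rintro rfl; simp at h
  have hcard : #{c ∈ range p | Odd c} = (p - 1) / 2 := by
    rw [filter_congr fun c _ => (Nat.odd_iff.trans (by omega) : Odd c ↔ 2 ∣ c + 1),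
      Nat.card_multiples]
    omega
  rw [← ZMod.intCast_zmod_eq_zero_iff_dvd]
  push_cast
  refine ZMod.sum_ne_zero_of_forall_eq_one_or_eq_neg_one (fun c hc => ?_) (hcard ▸ h)
    (by omega)
  obtain ⟨hcp, c, rfl⟩ := mem_filter.1 hc
  rw [show (p - 1) / 2 = p / 2 by omega]
  refine ZMod.pow_div_two_eq_neg_one_or_one (p := p) ?_
  rw [Ne, ZMod.natCast_eq_zero_iff]
  exact Nat.not_dvd_of_pos_of_lt (by omega) (mem_range.1 hcp)

namespace Padic

variable {p : ℕ} [hp : Fact p.Prime]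

theorem norm_bernoulli_le_one {i : ℕ} (hi : i < p - 1) : ‖(bernoulli i : ℚ_[p])‖ ≤ 1 := by
  obtain ⟨k, rfl | rfl⟩ := Nat.even_or_odd' i
  · obtain ⟨z, hz⟩ := Bernoulli.vonStaudt_clausen k
    rw [eq_sub_of_add_eq hz.symm, sub_eq_add_neg]
    push_cast
    refine (IsUltrametricDist.norm_add_le_max _ _).trans (max_le (norm_int_le_one z) ?_)
    rw [norm_neg]
    refine IsUltrametricDist.norm_sum_le_of_forall_le_of_nonneg zero_le_one fun q hq => ?_
    simp only [mem_filter, mem_range] at hq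
    obtain ⟨hq, hqprime, hqdvd⟩ := hq
    have hqp : q ≠ p := by
      rintro rfl
      have := Nat.eq_zero_of_dvd_of_lt hqdvd (by omega)
      have := hqprime.two_le
      omega
    have hqcop : p.Coprime q := (Nat.coprime_primes hp.out hqprime).2 hqp.symm
    rw [norm_div, norm_one, norm_natCast_eq_one_iff.2 hqcop, div_one]
  · rcases k.eq_zero_or_pos with rfl | hk
    · refine norm_rat_le_one ?_
      rw [bernoulli_one, show (-1 / 2 : ℚ).den = 2 by norm_num]
      exact fun h => by have := Nat.le_of_dvd two_pos h; omega
    · rw [bernoulli_eq_zero_of_odd (odd_two_mul_add_one k) (by omega)]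
      simp

theorem norm_bernoulli_sub_sum_range_pow_div_le {k : ℕ} (hk : k + 1 < p) :
    ‖(bernoulli k : ℚ_[p]) - (∑ a ∈ range p, (a : ℚ_[p]) ^ k) / p‖ ≤ (p : ℝ)⁻¹ := by
  have hfaulhaber : (∑ a ∈ range p, (a : ℚ) ^ k) / p =
      ∑ i ∈ range (k + 1), bernoulli i * (k + 1).choose i * (p : ℚ) ^ (k - i) / (k + 1) := by
    rw [sum_range_pow, sum_div]
    refine sum_congr rfl fun i hi => ?_
    rw [show k + 1 - i = k - i + 1 by have := mem_range.1 hi; omega, pow_succ]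
    field_simp [(Nat.cast_pos.2 hp.out.pos).ne']
  rw [sum_range_succ, Nat.choose_succ_self_right, Nat.sub_self, pow_zero, mul_one,
    mul_div_assoc, Nat.cast_succ, div_self (by positivity), mul_one] at hfaulhaber
  have hdiff : (∑ a ∈ range p, (a : ℚ_[p]) ^ k) / p - bernoulli k =
      ∑ i ∈ range k,
        bernoulli i * (k + 1).choose i * (p : ℚ_[p]) ^ (k - i) / (k + 1 : ℕ) := by
    simpa using congrArg (Rat.cast : ℚ → ℚ_[p]) (eq_sub_of_add_eq hfaulhaber.symm).symm
  rw [← norm_neg, neg_sub, hdiff]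
  refine IsUltrametricDist.norm_sum_le_of_forall_le_of_nonneg (by positivity) fun i hi => ?_
  have hik := mem_range.1 hi
  rw [norm_div, norm_natCast_eq_one_iff.2 (Nat.coprime_of_lt_prime (by omega) hk hp.out), div_one,
    norm_mul, norm_mul, norm_p_pow]
  calc ‖(bernoulli i : ℚ_[p])‖ * ‖((k + 1).choose i : ℚ_[p])‖ *
        (p : ℝ) ^ (-((k - i : ℕ) : ℤ))
      ≤ 1 * 1 * (p : ℝ) ^ (-1 : ℤ) := by
        gcongr
        · exact norm_bernoulli_le_one (by omega)
        · exact_mod_cast norm_int_le_one ((k + 1).choose i)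
        · exact_mod_cast hp.out.one_lt.le
        · omega
    _ = (p : ℝ)⁻¹ := by simp

theorem norm_rat_lt_one_of_dvd_num {q : ℚ} (h : (p : ℤ) ∣ q.num) :
    ‖(q : ℚ_[p])‖ < 1 := by
  have hden : p.Coprime q.den := (Nat.Prime.coprime_iff_not_dvd hp.out).2 fun hd =>
    Nat.not_coprime_of_dvd_of_dvd hp.out.one_lt (Int.natCast_dvd.1 h) hd q.reduced
  rw [← q.num_div_den, Rat.cast_div, norm_div, Rat.cast_intCast, Rat.cast_natCast,
    norm_natCast_eq_one_iff.2 hden, div_one]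
  exact norm_intCast_lt_one_iff.2 h

theorem norm_two_pow_sub_one_mul_bernoulli_sub_lt_one (hodd : Odd p) {n : ℕ} (hn : n + 1 < p) :
    ‖(2 ^ n - 1) * (bernoulli n : ℚ_[p])
      - n * ∑ c ∈ range p with Odd c, (c : ℚ_[p]) ^ (n - 1)‖ < 1 := by
  obtain ⟨t, ht⟩ := sq_dvd_two_pow_sub_one_mul_sum_range_pow hodd n
  have ht' := congrArg (Int.cast : ℤ → ℚ_[p]) ht
  push_cast at ht'
  have hp0 : (p : ℚ_[p]) ≠ 0 := by exact_mod_cast hp.out.ne_zero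
  have hsplit : (2 ^ n - 1) * (bernoulli n : ℚ_[p])
      - n * ∑ c ∈ range p with Odd c, (c : ℚ_[p]) ^ (n - 1) =
      (2 ^ n - 1) * ((bernoulli n : ℚ_[p]) - (∑ a ∈ range p, (a : ℚ_[p]) ^ n) / p) +
        p * t := by
    field_simp
    linear_combination ht'
  have hinv : (p : ℝ)⁻¹ < 1 := inv_lt_one_of_one_lt₀ (by exact_mod_cast hp.out.one_lt)
  rw [hsplit]
  refine (IsUltrametricDist.norm_add_le_max _ _).trans_lt (max_lt ?_ ?_)
  · rw [norm_mul]
    exact ((mul_le_of_le_one_left (norm_nonneg _)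
      (by exact_mod_cast norm_int_le_one (2 ^ n - 1))).trans
      (norm_bernoulli_sub_sum_range_pow_div_le hn)).trans_lt hinv
  · rw [norm_mul, norm_p]
    exact lt_of_le_of_lt (mul_le_of_le_one_right (by positivity) (norm_int_le_one t)) hinv

end Padic

theorem stmt_4_general (p : ℕ) (hp : p.Prime) (h : Odd ((p - 1) / 2)) :
    ¬ ((p : ℤ) ∣ (bernoulli ((p + 1) / 2)).num) := by
  have := Fact.mk hp
  have hodd : Odd p := hp.odd_of_ne_two (by rintro rfl; simp at h)
  obtain rfl | hp5 : p = 3 ∨ 5 ≤ p := by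
    have := hp.two_le; have := Nat.odd_iff.1 hodd; omega
  · norm_num [bernoulli_two]
  set n := (p + 1) / 2
  intro hdvd
  have hB : ‖((2 : ℚ_[p]) ^ n - 1) * bernoulli n‖ < 1 := by
    rw [norm_mul]
    exact (mul_le_of_le_one_left (norm_nonneg _)
      (by exact_mod_cast Padic.norm_int_le_one (2 ^ n - 1))).trans_lt
      (Padic.norm_rat_lt_one_of_dvd_num hdvd)
  have hE := Padic.norm_two_pow_sub_one_mul_bernoulli_sub_lt_one hodd (n := n) (by omega)
  have hnU : ‖((n * ∑ c ∈ range p with Odd c, (c : ℤ) ^ ((p - 1) / 2) : ℤ) : ℚ_[p])‖ < 1 := by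
    rw [show (p - 1) / 2 = n - 1 by omega]
    push_cast
    rw [← sub_sub_cancel (((2 : ℚ_[p]) ^ n - 1) * bernoulli n) (n * _), sub_eq_add_neg]
    refine (IsUltrametricDist.norm_add_le_max _ _).trans_lt (max_lt hB ?_)
    rwa [norm_neg]
  rcases (Nat.prime_iff_prime_int.1 hp).dvd_or_dvd (Padic.norm_intCast_lt_one_iff.1 hnU)
    with hn | hU
  · exact Nat.not_dvd_of_pos_of_lt (by omega) (by omega : n < p) (Int.natCast_dvd_natCast.1 hn)
  · exact not_dvd_sum_range_odd_pow h hU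

/-- Let `p` be an odd prime such that `(p-1)/2` is odd (equivalently
`p ≡ 3 mod 4`). Then the Bernoulli number `B_{(p+1)/2}` is not congruent to `0` modulo `p`,
i.e. `p` does not divide the numerator of `B_{(p+1)/2}`. -/
theorem stmt_4 (p : ℕ) (hp : p.Prime) (hodd : Odd p) (h : Odd ((p - 1) / 2)) :
    ¬ ((p : ℤ) ∣ (bernoulli ((p + 1) / 2)).num) :=
  stmt_4_general p hp h
end

section
/- If q ≢ 1 mod p (equivalently f > 1), then the Gauss sum g(𝔮) lies in ℤ[ζ_p]; that is, g(𝔮) is fixed by every automorphism of ℚ(ζ_p, ζ_q) that fixes ℚ(ζ_p). -/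
/-!
The values of `χ` are `p`-th roots of unity and `p ∤ q - 1`, so `χ` is trivial on `𝔽_q^*`.
Then multiplication by `t ∈ 𝔽_q^*` permutes the fibres of the trace without changing `χ`, so
the character sums `S t = ∑_{Tr x = t} χ x` agree for all `t ≠ 0`, and
`g(𝔮) = ∑_t S t ζ_q^t = S 0 - S 1` because `∑_{t ≠ 0} ζ_q^t = -1`.
Each `S t` is a sum of `p`-th roots of unity, so it lies in `ℤ[ζ_p]`.
-/

open Finset

lemma eq_pow_mul_pred_of_mul_pow_eq_one {M : Type*} [CommMonoid M] {a ζ : M} {n c : ℕ}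
    (hn : 0 < n) (hζ : ζ ^ n = 1) (h : a * ζ ^ c = 1) : a = ζ ^ (c * (n - 1)) :=
  calc a = a * (ζ ^ n) ^ c := by rw [hζ, one_pow, mul_one]
    _ = a * ζ ^ c * ζ ^ (c * (n - 1)) := by
      rw [mul_assoc, ← pow_mul, ← pow_add, ← mul_one_add, show 1 + (n - 1) = n by omega,
        mul_comm c n]
    _ = ζ ^ (c * (n - 1)) := by rw [h, one_mul]

namespace MulChar

variable {K F R : Type*} [Field K] [CommRing F] [Algebra K F]

lemma map_algebraMap_eq_one_of_pow_eq_one [Fintype K] [CommMonoidWithZero R] (χ : MulChar F R)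
    {n : ℕ} (hχ : ∀ x, IsUnit x → χ x ^ n = 1) (hn : n.Coprime (Fintype.card K - 1)) {c : K}
    (hc : c ≠ 0) : χ (algebraMap K F c) = 1 := by
  have hc' : IsUnit (algebraMap K F c) := (Ne.isUnit hc).map _
  have hcard : χ (algebraMap K F c) ^ (Fintype.card K - 1) = 1 := by
    rw [← map_pow, ← map_pow, FiniteField.pow_card_sub_one_eq_one c hc, map_one, map_one]
  simpa [hn] using pow_gcd_eq_one.mpr ⟨hχ _ hc', hcard⟩

variable [DecidableEq K] [Fintype F] [CommRing R]

lemma sum_fiber_eq_sum_fiber_one (χ : MulChar F R)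
    (hχ : ∀ c : K, c ≠ 0 → χ (algebraMap K F c) = 1) (T : F →ₗ[K] K) {t : K}
    (ht : t ≠ 0) :
    ∑ x with T x = t, χ x = ∑ x with T x = 1, χ x := by
  refine sum_nbij' (algebraMap K F t⁻¹ * ·) (algebraMap K F t * ·) ?_ ?_ ?_ ?_ ?_
  · intro x hx
    rw [mem_filter] at hx ⊢
    rw [← Algebra.smul_def, T.map_smul, hx.2, smul_eq_mul, inv_mul_cancel₀ ht]
    exact ⟨mem_univ _, rfl⟩
  · intro x hx
    rw [mem_filter] at hx ⊢
    rw [← Algebra.smul_def, T.map_smul, hx.2, smul_eq_mul, mul_one]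
    exact ⟨mem_univ _, rfl⟩
  · intro x _
    rw [← mul_assoc, ← map_mul, mul_inv_cancel₀ ht, map_one, one_mul]
  · intro x _
    rw [← mul_assoc, ← map_mul, inv_mul_cancel₀ ht, map_one, one_mul]
  · intro x _
    rw [map_mul, hχ _ (inv_ne_zero ht), one_mul]

lemma gaussSum_eq_sub_of_map_algebraMap_eq_one [Fintype K] [IsDomain R] (χ : MulChar F R)
    (hχ : ∀ c : K, c ≠ 0 → χ (algebraMap K F c) = 1) (T : F →ₗ[K] K)
    {φ : AddChar K R} (hφ : φ ≠ 1) {ψ : AddChar F R} (hψ : ∀ x, ψ x = φ (T x)) :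
    gaussSum χ ψ = ∑ x with T x = 0, χ x - ∑ x with T x = 1, χ x := by
  set S : K → R := fun t ↦ ∑ x with T x = t, χ x
  calc gaussSum χ ψ = ∑ t, S t * φ t := by
        simp_rw [gaussSum, hψ, S, sum_mul, ← sum_fiberwise univ T (fun x ↦ χ x * φ (T x))]
        refine sum_congr rfl fun t _ ↦ sum_congr rfl fun x hx ↦ ?_
        rw [(mem_filter.mp hx).2]
    _ = ∑ t, (S t - S 1) * φ t + S 1 * ∑ t, φ t := by
        simp [sub_mul, mul_sum]
    _ = (S 0 - S 1) * φ 0 := by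
        rw [AddChar.sum_eq_zero_of_ne_one hφ, mul_zero, add_zero]
        refine Fintype.sum_eq_single 0 fun t ht ↦ ?_
        rw [show S t = S 1 from sum_fiber_eq_sum_fiber_one χ hχ T ht, sub_self, zero_mul]
    _ = S 0 - S 1 := by rw [AddChar.map_zero_eq_one, mul_one]

end MulChar

theorem stmt_5_general (p q : ℕ) (hp : p.Prime) (hq : q.Prime)
    (ζp ζq : ℂ) (hζp : IsPrimitiveRoot ζp p) (hζq : IsPrimitiveRoot ζq q)
    (O : Subalgebra ℤ ℂ)
    (zp : O)
    (f : ℕ)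
    (𝔮 : Ideal O) (h𝔮max : 𝔮.IsMaximal)
    [Fintype (O ⧸ 𝔮)]
    [Algebra (ZMod q) (O ⧸ 𝔮)]
    (χ : MulChar (O ⧸ 𝔮) ℂ)
    (hχ : ∀ α : O, α ∉ 𝔮 → ∃ c : ℕ,
      χ (Ideal.Quotient.mk 𝔮 α) * ζp ^ c = 1 ∧
      α ^ ((q ^ f - 1) / p) - zp ^ c ∈ 𝔮)
    (ψ : AddChar (O ⧸ 𝔮) ℂ)
    (hψ : ∀ x : O ⧸ 𝔮, ψ x = ζq ^ (Algebra.trace (ZMod q) (O ⧸ 𝔮) x).val)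
    (hq1 : (q : ZMod p) ≠ 1) :
    gaussSum χ ψ ∈ Algebra.adjoin ℤ {ζp} := by
  have : Fact q.Prime := ⟨hq⟩
  have hχζ : ∀ x : O ⧸ 𝔮, x ≠ 0 → ∃ k, χ x = ζp ^ k := fun x hx ↦ by
    obtain ⟨α, rfl⟩ := Ideal.Quotient.mk_surjective x
    obtain ⟨c, hc, -⟩ := hχ α fun h ↦ hx (Ideal.Quotient.eq_zero_iff_mem.mpr h)
    exact ⟨_, eq_pow_mul_pred_of_mul_pow_eq_one hp.pos hζp.pow_eq_one hc⟩
  have hχA : ∀ x, χ x ∈ Algebra.adjoin ℤ {ζp} := fun x ↦ by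
    by_cases hx : x = 0
    · rw [hx, χ.map_zero]
      exact zero_mem _
    · obtain ⟨k, hk⟩ := hχζ x hx
      rw [hk]
      exact pow_mem (Algebra.subset_adjoin (Set.mem_singleton ζp)) k
  have hχp : ∀ x, IsUnit x → χ x ^ p = 1 := fun x hx ↦ by
    obtain ⟨k, hk⟩ := hχζ x hx.ne_zero
    rw [hk, ← pow_mul, mul_comm, pow_mul, hζp.pow_eq_one, one_pow]
  have hpq : p.Coprime (Fintype.card (ZMod q) - 1) := by
    rw [ZMod.card, hp.coprime_iff_not_dvd, ← Nat.modEq_iff_dvd' hq.one_le,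
      ← ZMod.natCast_eq_natCast_iff, Nat.cast_one]
    exact hq1.symm
  have hφ : AddChar.zmodChar q hζq.pow_eq_one ≠ 1 := by
    rw [AddChar.zmod_char_ne_one_iff, AddChar.zmodChar_apply, ZMod.val_one, pow_one]
    exact hζq.ne_one hq.one_lt
  rw [χ.gaussSum_eq_sub_of_map_algebraMap_eq_one
    (fun c hc ↦ χ.map_algebraMap_eq_one_of_pow_eq_one hχp hpq hc)
    (Algebra.trace (ZMod q) (O ⧸ 𝔮)) hφ hψ]
  exact sub_mem (sum_mem fun x _ ↦ hχA x) (sum_mem fun x _ ↦ hχA x)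

/-- If `q ≢ 1 mod p` (equivalently `f > 1`), then the Gauss sum `g(𝔮)`
lies in `ℤ[ζ_p]`.

Setup: `O = ℤ[ζ_p]` is realized as the subalgebra of `ℂ` generated by a primitive `p`-th
root of unity `ζp`, `𝔮` is a (maximal) prime ideal of `O` above `q` with residue field
`O⧸𝔮` of cardinality `q^f` (`f` the order of `q` mod `p`), `χ` is the inverse of the
`p`-th power residue character mod `𝔮` and `ψ(x) = ζq^(Tr(x))`; the Gauss sum is
`g(𝔮) = gaussSum χ ψ = Σ_x χ(x)·ψ(x)`. -/
theorem stmt_5 (p q : ℕ) (hp : p.Prime) (hq : q.Prime)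
    (hoddp : Odd p) (hoddq : Odd q) (hpq : p ≠ q)
    (ζp ζq : ℂ) (hζp : IsPrimitiveRoot ζp p) (hζq : IsPrimitiveRoot ζq q)
    (O : Subalgebra ℤ ℂ) (hO : O = Algebra.adjoin ℤ {ζp})
    (zp : O) (hzp : (zp : ℂ) = ζp)
    (f : ℕ) (hford : f = orderOf (q : ZMod p))
    (𝔮 : Ideal O) (h𝔮max : 𝔮.IsMaximal) (h𝔮q : ((q : ℕ) : O) ∈ 𝔮)
    [Fintype (O ⧸ 𝔮)] (hcard : Fintype.card (O ⧸ 𝔮) = q ^ f)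
    [Algebra (ZMod q) (O ⧸ 𝔮)]
    (χ : MulChar (O ⧸ 𝔮) ℂ)
    (hχ : ∀ α : O, α ∉ 𝔮 → ∃ c : ℕ,
      χ (Ideal.Quotient.mk 𝔮 α) * ζp ^ c = 1 ∧
      α ^ ((q ^ f - 1) / p) - zp ^ c ∈ 𝔮)
    (ψ : AddChar (O ⧸ 𝔮) ℂ)
    (hψ : ∀ x : O ⧸ 𝔮, ψ x = ζq ^ (Algebra.trace (ZMod q) (O ⧸ 𝔮) x).val)
    (hq1 : (q : ZMod p) ≠ 1) :
    gaussSum χ ψ ∈ Algebra.adjoin ℤ {ζp} :=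
  stmt_5_general p q hp hq ζp ζq hζp hζq O zp f 𝔮 h𝔮max χ hχ ψ hψ hq1
end

section
/- In the group ring ℤ[G_p] one has the identity P(σ)·(σ − v) = p·Q(σ), where Q(σ) = Σ_{i=1}^{p−2} δ_i·σ^i with δ_i = (v^{−(i−1)} − v^{−i}·v)/p; each δ_i is a rational integer satisfying −p < δ_i ≤ 0, and the constant coefficient (v^{−(p−2)} − v)/p equals 0. -/
/-- The representative in `{0,…,p-1}` of `v^{-n} mod p`. -/
def vI (p v n : ℕ) : ℕ := (((v : ZMod p)⁻¹) ^ n).val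

/-- The integer `δ_i = (v^{-(i-1)} - v^{-i}·v)/p` (an exact quotient). -/
def delta (p v i : ℕ) : ℤ := ((vI p v (i - 1) : ℤ) - (vI p v i : ℤ) * v) / p

/-!
Write `a_i = v^{-i} mod p`. Multiplying by `σ` shifts the coefficients cyclically, so the
coefficient of `σ^i` in `P(σ)(σ - v)` is `a_{i-1} - v a_i`, indices taken mod `p - 1`. Each of
these is `≡ v^{-(i-1)} - v^{-i} v = 0 (mod p)`, which gives `Q`; the bounds on `δ_i` follow from
`0 ≤ a_j < p` and `v < p`. By Fermat `a_{p-2} = v`, so the constant coefficient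
`a_{p-2} - v a_0` vanishes.
-/

open Finset MonoidAlgebra

theorem sum_single_mul_single_one_sub_single {R : Type*} [Ring R] (m : ℕ) (a : ℕ → R) (c : R) :
    (∑ i ∈ range (m + 1), single (Multiplicative.ofAdd (i : ZMod (m + 1))) (a i)) *
        (single (Multiplicative.ofAdd 1) 1 - single (Multiplicative.ofAdd 0) c) =
      single (Multiplicative.ofAdd 0) (a m - a 0 * c) +
        ∑ i ∈ Icc 1 m, single (Multiplicative.ofAdd (i : ZMod (m + 1))) (a (i - 1) - a i * c) := by
  have hwrap : ((m : ZMod (m + 1)) + 1) = 0 := by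
    rw [← Nat.cast_succ, ZMod.natCast_self]
  have hIcc : ∀ f : ℕ → MonoidAlgebra R (Multiplicative (ZMod (m + 1))),
      ∑ i ∈ Icc 1 m, f i = ∑ i ∈ range m, f (i + 1) := fun f => by
    rw [← Ico_add_one_right_eq_Icc, sum_Ico_eq_sum_range, Nat.add_sub_cancel]
    simp only [add_comm 1]
  rw [mul_sub, sum_mul, sum_mul, sum_range_succ, sum_range_succ', hIcc]
  simp only [single_mul_single, mul_one, ← ofAdd_add, add_zero, hwrap, Nat.cast_zero,
    Nat.add_sub_cancel, single_sub, sum_sub_distrib, Nat.cast_succ]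
  abel

section Residues

variable {p v : ℕ}

theorem natCast_vI [NeZero p] (k : ℕ) : ((vI p v k : ℕ) : ZMod p) = (v : ZMod p)⁻¹ ^ k := by
  rw [vI, ZMod.natCast_val, ZMod.cast_id]

theorem vI_lt [NeZero p] (k : ℕ) : vI p v k < p := ZMod.val_lt _

theorem vI_zero (hp : 1 < p) : vI p v 0 = 1 := by
  have := Fact.mk hp
  simp [vI, ZMod.val_one]

variable [Fact p.Prime]

theorem vI_sub_two (hv : (v : ZMod p) ≠ 0) (hvlt : v < p) : vI p v (p - 2) = v := by
  have hp := (Fact.out : p.Prime).two_le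
  have hinv : (v : ZMod p)⁻¹ ^ (p - 2) * (v : ZMod p)⁻¹ = 1 := by
    rw [← pow_succ, show p - 2 + 1 = p - 1 by omega, inv_pow, ZMod.pow_card_sub_one_eq_one hv,
      inv_one]
  rw [vI, eq_inv_of_mul_eq_one_left hinv, inv_inv, ZMod.val_cast_of_lt hvlt]

theorem mul_delta (hv : (v : ZMod p) ≠ 0) {i : ℕ} (hi : 1 ≤ i) :
    (p : ℤ) * delta p v i = (vI p v (i - 1) : ℤ) - (vI p v i : ℤ) * v := by
  refine Int.mul_ediv_cancel' ?_
  obtain ⟨j, rfl⟩ : ∃ j, i = j + 1 := ⟨i - 1, by omega⟩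
  rw [← ZMod.intCast_zmod_eq_zero_iff_dvd]
  push_cast
  rw [natCast_vI, natCast_vI, pow_succ, mul_assoc, inv_mul_cancel₀ hv, mul_one, sub_self]

theorem delta_nonpos (hv : (v : ZMod p) ≠ 0) {i : ℕ} (hi : 1 ≤ i) : delta p v i ≤ 0 := by
  have hmul := mul_delta hv hi
  have ha : (vI p v (i - 1) : ℤ) < p := by exact_mod_cast vI_lt _
  have hp : (0 : ℤ) < p := by exact_mod_cast (Fact.out : p.Prime).pos
  nlinarith [(vI p v i * v : ℕ).cast_nonneg (α := ℤ)]

theorem neg_lt_delta (hv : (v : ZMod p) ≠ 0) (hvlt : v < p) {i : ℕ} (hi : 1 ≤ i) :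
    -(p : ℤ) < delta p v i := by
  have hmul := mul_delta hv hi
  have hb : (vI p v i : ℤ) < p := by exact_mod_cast vI_lt _
  have hv' : (v : ℤ) < p := by exact_mod_cast hvlt
  nlinarith [(vI p v (i - 1)).cast_nonneg (α := ℤ), (vI p v i).cast_nonneg (α := ℤ),
    v.cast_nonneg (α := ℤ)]

end Residues

theorem stmt_9_general (p v : ℕ) (hp : p.Prime)
    (hv : IsPrimitiveRoot (v : ZMod p) (p - 1)) (hvlt : v < p) :
    ((∑ i ∈ Finset.range (p - 1),
        MonoidAlgebra.single (Multiplicative.ofAdd (i : ZMod (p - 1))) (vI p v i : ℤ)) *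
      (MonoidAlgebra.single (Multiplicative.ofAdd (1 : ZMod (p - 1))) (1 : ℤ) -
        MonoidAlgebra.single (Multiplicative.ofAdd (0 : ZMod (p - 1))) (v : ℤ)) =
      (p : ℤ) • ∑ i ∈ Finset.Icc 1 (p - 2),
        MonoidAlgebra.single (Multiplicative.ofAdd (i : ZMod (p - 1))) (delta p v i)) ∧
    (∀ i ∈ Finset.Icc 1 (p - 2), -(p : ℤ) < delta p v i ∧ delta p v i ≤ 0) ∧
    ((vI p v (p - 2) : ℤ) - (v : ℤ)) / p = 0 := by
  have := Fact.mk hp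
  have hv0 : (v : ZMod p) ≠ 0 := hv.ne_zero (Nat.sub_ne_zero_of_lt hp.one_lt)
  have hlast := vI_sub_two hv0 hvlt
  refine ⟨?_, fun i hi => ⟨neg_lt_delta hv0 hvlt (mem_Icc.1 hi).1,
    delta_nonpos hv0 (mem_Icc.1 hi).1⟩, by rw [hlast, sub_self, Int.zero_ediv]⟩
  rw [show p - 1 = p - 2 + 1 by have := hp.two_le; omega, sum_single_mul_single_one_sub_single,
    hlast, vI_zero hp.one_lt, Nat.cast_one, one_mul, sub_self, single_zero, zero_add, smul_sum]
  refine sum_congr rfl fun i hi => ?_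
  rw [smul_single', mul_delta hv0 (mem_Icc.1 hi).1]

/-- In the group ring `ℤ[G_p]`, where `G_p = Gal(ℚ(ζ_p)/ℚ)` is cyclic of
order `p - 1` generated by `σ`, one has `P(σ)·(σ - v) = p·Q(σ)` where
`P(σ) = Σ_{i=0}^{p-2} v^{-i}·σ^i` and `Q(σ) = Σ_{i=1}^{p-2} δ_i·σ^i` with
`δ_i = (v^{-(i-1)} - v^{-i}·v)/p`; each `δ_i` is a rational integer with `-p < δ_i ≤ 0`,
and the constant coefficient `(v^{-(p-2)} - v)/p` equals `0`.

`G_p` is modelled as `Multiplicative (ZMod (p-1))`, `σ` corresponding to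
`Multiplicative.ofAdd 1`. -/
theorem stmt_9 (p v : ℕ) (hp : p.Prime) (hodd : Odd p)
    (hv : IsPrimitiveRoot (v : ZMod p) (p - 1)) (hvlt : v < p) :
    ((∑ i ∈ Finset.range (p - 1),
        MonoidAlgebra.single (Multiplicative.ofAdd (i : ZMod (p - 1))) (vI p v i : ℤ)) *
      (MonoidAlgebra.single (Multiplicative.ofAdd (1 : ZMod (p - 1))) (1 : ℤ) -
        MonoidAlgebra.single (Multiplicative.ofAdd (0 : ZMod (p - 1))) (v : ℤ)) =
      (p : ℤ) • ∑ i ∈ Finset.Icc 1 (p - 2),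
        MonoidAlgebra.single (Multiplicative.ofAdd (i : ZMod (p - 1))) (delta p v i)) ∧
    (∀ i ∈ Finset.Icc 1 (p - 2), -(p : ℤ) < delta p v i ∧ delta p v i ≤ 0) ∧
    ((vI p v (p - 2) : ℤ) - (v : ℤ)) / p = 0 :=
  stmt_9_general p v hp hv hvlt
end

section
/- If the multiplicative order f of q modulo p is even, then there exists a natural number w such that g(𝔮) = ±ζ_p^w·q^{f/2}. -/
/-!
Let `g(χ, ψ)` be the Gauss sum with `χ` of order `p` and `ψ = ζ_q ^ Tr`. The trace, hence `ψ`, is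
invariant under Frobenius, so substituting `x ↦ x ^ q` gives `g(χ ^ q, ψ) = g(χ, ψ)`. For `f` even,
`q ^ (f / 2) ≡ -1 [MOD p]`, hence `χ ^ q ^ (f / 2) = χ⁻¹` and `g(χ, ψ) = g(χ⁻¹, ψ)`. Since
`χ (-1) = 1` for odd `p`, the identity `g(χ, ψ) g(χ⁻¹, ψ⁻¹) = q ^ f` then reads
`g(χ, ψ) ^ 2 = q ^ f`, so `g(χ, ψ) = ±q ^ (f / 2)`, and `w = 0` works.
-/

theorem pow_eq_inv_of_dvd_add_one {G : Type*} [Group G] {g : G} {n m : ℕ} (hg : g ^ n = 1)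
    (h : n ∣ m + 1) : g ^ m = g⁻¹ := by
  obtain ⟨k, hk⟩ := h
  exact eq_inv_of_mul_eq_one_left (by rw [← pow_succ, hk, pow_mul, hg, one_pow])

theorem pow_orderOf_div_two_eq_neg_one {R : Type*} [CommRing R] [NoZeroDivisors R] {a : R}
    (h0 : orderOf a ≠ 0) (he : Even (orderOf a)) : a ^ (orderOf a / 2) = -1 := by
  have h2 : IsPrimitiveRoot (a ^ (orderOf a / 2)) (orderOf a / (orderOf a / 2)) :=
    (IsPrimitiveRoot.orderOf a).pow_of_dvd (by obtain ⟨k, hk⟩ := he; omega)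
      (Nat.div_dvd_of_dvd he.two_dvd)
  rw [Nat.div_div_self he.two_dvd h0] at h2
  exact h2.eq_neg_one_of_two_right

theorem dvd_pow_orderOf_sub_one {p q : ℕ} (hq : 0 < q) : p ∣ q ^ orderOf (q : ZMod p) - 1 := by
  rw [← Nat.modEq_iff_dvd' (Nat.one_le_pow _ _ hq), ← ZMod.natCast_eq_natCast_iff, Nat.cast_pow,
    pow_orderOf_eq_one, Nat.cast_one]

theorem dvd_pow_orderOf_div_two_add_one {p q : ℕ} [Fact p.Prime] (h0 : orderOf (q : ZMod p) ≠ 0)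
    (he : Even (orderOf (q : ZMod p))) : p ∣ q ^ (orderOf (q : ZMod p) / 2) + 1 := by
  rw [← ZMod.natCast_eq_zero_iff, Nat.cast_add, Nat.cast_pow, pow_orderOf_div_two_eq_neg_one h0 he,
    Nat.cast_one, neg_add_cancel]

theorem exists_pow_card_sub_one_div_ne_one (F : Type*) [Field F] [Fintype F] {d : ℕ}
    (hd : d ∣ Fintype.card F - 1) (hd1 : 1 < d) :
    ∃ x : F, x ≠ 0 ∧ x ^ ((Fintype.card F - 1) / d) ≠ 1 := by
  classical
  by_contra! h
  have hexp : Monoid.exponent Fˣ ∣ (Fintype.card F - 1) / d :=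
    Monoid.exponent_dvd_of_forall_pow_eq_one fun u ↦ Units.ext (by simpa using h u u.ne_zero)
  rw [IsCyclic.exponent_eq_card, Nat.card_eq_fintype_card, Fintype.card_units] at hexp
  have hpos : 0 < Fintype.card F - 1 := Nat.sub_pos_of_lt Fintype.one_lt_card
  exact (Nat.div_lt_self hpos hd1).not_ge
    (Nat.le_of_dvd (Nat.div_pos (Nat.le_of_dvd hpos hd) (by omega)) hexp)

theorem gaussSum_pow_eq_of_bijective {F R : Type*} [CommRing F] [Fintype F] [CommRing R]
    (χ : MulChar F R) {ψ : AddChar F R} {m : ℕ} (hm0 : m ≠ 0)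
    (hm : Function.Bijective fun x : F ↦ x ^ m) (hψ : ∀ x, ψ (x ^ m) = ψ x) :
    gaussSum (χ ^ m) ψ = gaussSum χ ψ :=
  Fintype.sum_bijective _ hm _ _ fun x ↦ by rw [χ.pow_apply' hm0, ← map_pow, hψ]

theorem MulChar.pow_eq_one_of_mul_pow_eq_one {F R : Type*} [CommMonoidWithZero F]
    [Nontrivial F] [CommMonoidWithZero R] {χ : MulChar F R} {ζ : R} {p : ℕ}
    (hζ : ζ ^ p = 1) (hχ : ∀ x : F, x ≠ 0 → ∃ c : ℕ, χ x * ζ ^ c = 1) : χ ^ p = 1 := by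
  refine MulChar.ext fun a ↦ ?_
  obtain ⟨c, hc⟩ := hχ a a.ne_zero
  calc (χ ^ p) a = (χ a * ζ ^ c) ^ p := by
        rw [MulChar.pow_apply_coe, mul_pow, ← pow_mul, mul_comm c, pow_mul, hζ, one_pow, mul_one]
    _ = (1 : MulChar F R) a := by rw [hc, one_pow, MulChar.one_apply_coe]

section FiniteField

variable {F R : Type*} [Field F] [Fintype F]

theorem Algebra.trace_pow_char (q : ℕ) [Fact q.Prime] [Algebra (ZMod q) F] (x : F) :
    Algebra.trace (ZMod q) F (x ^ q) = Algebra.trace (ZMod q) F x := by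
  have : CharP F q := charP_of_injective_algebraMap (algebraMap (ZMod q) F).injective q
  simpa [ZMod.card] using
    Algebra.trace_eq_of_algEquiv (FiniteField.frobeniusAlgEquiv (ZMod q) F q) x

section Frobenius

variable [CommRing R] {q : ℕ} [Fact q.Prime] [CharP F q]

theorem gaussSum_pow_char_pow (χ : MulChar F R) {ψ : AddChar F R} (hψ : ∀ x, ψ (x ^ q) = ψ x)
    (k : ℕ) : gaussSum (χ ^ q ^ k) ψ = gaussSum χ ψ := by
  induction k with
  | zero => rw [pow_zero, pow_one]
  | succ k ih =>
    rw [pow_succ, pow_mul,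
      gaussSum_pow_eq_of_bijective _ (Fact.out : q.Prime).ne_zero (bijective_frobenius F q) hψ, ih]

theorem gaussSum_eq_gaussSum_inv {χ : MulChar F R} {ψ : AddChar F R} {n k : ℕ}
    (hψ : ∀ x, ψ (x ^ q) = ψ x) (hχ : χ ^ n = 1) (hn : n ∣ q ^ k + 1) :
    gaussSum χ ψ = gaussSum χ⁻¹ ψ := by
  rw [← pow_eq_inv_of_dvd_add_one hχ hn, gaussSum_pow_char_pow χ hψ]

end Frobenius

theorem gaussSum_sq_eq_card_of_eq_inv [CommRing R] [IsDomain R] {χ : MulChar F R}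
    {ψ : AddChar F R} (hχ : χ ≠ 1) (hψ : ψ.IsPrimitive) (hχ₁ : χ (-1) = 1)
    (h : gaussSum χ ψ = gaussSum χ⁻¹ ψ) : gaussSum χ ψ ^ 2 = Fintype.card F := by
  rw [sq, ← gaussSum_mul_gaussSum_eq_card hχ hψ]
  nth_rewrite 2 [h]
  rw [← mul_gaussSum_inv_eq_gaussSum χ⁻¹ ψ, MulChar.inv_apply', inv_neg_one, hχ₁, one_mul]

theorem MulChar.ne_one_of_pow_card_sub_one_div [CommRing R] [Nontrivial R] {χ : MulChar F R}
    {ζ : R} {z : F} {p : ℕ} (hp : p.Prime) (hζ : IsPrimitiveRoot ζ p) (hz : z ^ p = 1)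
    (hpF : p ∣ Fintype.card F - 1)
    (hχ : ∀ x : F, x ≠ 0 → ∃ c : ℕ, χ x * ζ ^ c = 1 ∧ x ^ ((Fintype.card F - 1) / p) = z ^ c) :
    χ ≠ 1 := by
  rintro rfl
  obtain ⟨x, hx0, hx⟩ := exists_pow_card_sub_one_div_ne_one F hpF hp.one_lt
  obtain ⟨c, hc, hxc⟩ := hχ x hx0
  rw [MulChar.one_apply (isUnit_iff_ne_zero.mpr hx0), one_mul] at hc
  obtain ⟨d, rfl⟩ := (hζ.pow_eq_one_iff_dvd c).mp hc
  exact hx (by rw [hxc, pow_mul, hz, one_pow])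

variable [CommMonoid R] {q : ℕ} [Fact q.Prime] [Algebra (ZMod q) F] {ψ : AddChar F R} {ζ : R}

theorem AddChar.apply_pow_char_of_trace
    (hψ : ∀ x, ψ x = ζ ^ (Algebra.trace (ZMod q) F x).val) (x : F) : ψ (x ^ q) = ψ x := by
  rw [hψ, hψ, Algebra.trace_pow_char]

theorem AddChar.isPrimitive_of_trace (hζ : IsPrimitiveRoot ζ q)
    (hψ : ∀ x, ψ x = ζ ^ (Algebra.trace (ZMod q) F x).val) : ψ.IsPrimitive := by
  refine AddChar.IsPrimitive.of_ne_one fun h ↦ ?_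
  obtain ⟨x, hx⟩ := Algebra.trace_surjective (ZMod q) F 1
  have hψx := hψ x
  rw [h, AddChar.one_apply, hx, ZMod.val_one, pow_one] at hψx
  exact hζ.ne_one (Fact.out : q.Prime).one_lt hψx.symm

end FiniteField

theorem stmt_10_general (p q : ℕ) (hp : p.Prime) (hq : q.Prime)
    (hoddp : Odd p)
    (ζp ζq : ℂ) (hζp : IsPrimitiveRoot ζp p) (hζq : IsPrimitiveRoot ζq q)
    (O : Subalgebra ℤ ℂ)
    (zp : O) (hzp : (zp : ℂ) = ζp)
    (f : ℕ) (hford : f = orderOf (q : ZMod p))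
    (𝔮 : Ideal O) (h𝔮max : 𝔮.IsMaximal)
    [Fintype (O ⧸ 𝔮)] (hcard : Fintype.card (O ⧸ 𝔮) = q ^ f)
    [Algebra (ZMod q) (O ⧸ 𝔮)]
    (χ : MulChar (O ⧸ 𝔮) ℂ)
    (hχ : ∀ α : O, α ∉ 𝔮 → ∃ c : ℕ,
      χ (Ideal.Quotient.mk 𝔮 α) * ζp ^ c = 1 ∧
      α ^ ((q ^ f - 1) / p) - zp ^ c ∈ 𝔮)
    (ψ : AddChar (O ⧸ 𝔮) ℂ)
    (hψ : ∀ x : O ⧸ 𝔮, ψ x = ζq ^ (Algebra.trace (ZMod q) (O ⧸ 𝔮) x).val)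
    (hfeven : Even f) :
    ∃ w : ℕ, gaussSum χ ψ = ζp ^ w * (q : ℂ) ^ (f / 2) ∨
      gaussSum χ ψ = -(ζp ^ w * (q : ℂ) ^ (f / 2)) := by
  have : Fact p.Prime := ⟨hp⟩
  have : Fact q.Prime := ⟨hq⟩
  let : Field (O ⧸ 𝔮) := Ideal.Quotient.field 𝔮
  have : CharP (O ⧸ 𝔮) q := charP_of_injective_algebraMap (algebraMap (ZMod q) _).injective q
  have hf0 : f ≠ 0 := by
    rintro rfl
    exact Fintype.one_lt_card.ne' (hcard.trans (pow_zero q))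
  have hz : Ideal.Quotient.mk 𝔮 zp ^ p = 1 := by
    rw [← map_pow, show zp ^ p = 1 from Subtype.ext (by simp [hzp, hζp.pow_eq_one]), map_one]
  have hχF : ∀ x : O ⧸ 𝔮, x ≠ 0 → ∃ c : ℕ, χ x * ζp ^ c = 1 ∧
      x ^ ((Fintype.card (O ⧸ 𝔮) - 1) / p) = Ideal.Quotient.mk 𝔮 zp ^ c := by
    intro x hx
    obtain ⟨α, rfl⟩ := Ideal.Quotient.mk_surjective x
    obtain ⟨c, hc, hαc⟩ := hχ α (mt Ideal.Quotient.eq_zero_iff_mem.mpr hx)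
    exact ⟨c, hc, by rw [hcard, ← map_pow, ← map_pow]; exact Ideal.Quotient.eq.mpr hαc⟩
  have hpF : p ∣ q ^ f - 1 := hford ▸ dvd_pow_orderOf_sub_one hq.pos
  have hpk : p ∣ q ^ (f / 2) + 1 :=
    hford ▸ dvd_pow_orderOf_div_two_add_one (hford ▸ hf0) (hford ▸ hfeven)
  have hχp : χ ^ p = 1 := MulChar.pow_eq_one_of_mul_pow_eq_one hζp.pow_eq_one
    fun x hx ↦ (hχF x hx).imp fun _ ↦ And.left
  have hχ1 : χ ≠ 1 := MulChar.ne_one_of_pow_card_sub_one_div hp hζp hz (hcard ▸ hpF) hχF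
  have hg : gaussSum χ ψ = gaussSum χ⁻¹ ψ :=
    gaussSum_eq_gaussSum_inv (AddChar.apply_pow_char_of_trace hψ) hχp hpk
  have hsq : gaussSum χ ψ ^ 2 = ((q : ℂ) ^ (f / 2)) ^ 2 := by
    rw [gaussSum_sq_eq_card_of_eq_inv hχ1 (AddChar.isPrimitive_of_trace hζq hψ)
      (MulChar.val_neg_one_eq_one_of_odd_order hoddp hχp) hg,
      hcard, ← pow_mul, Nat.div_mul_cancel hfeven.two_dvd, Nat.cast_pow]
  exact ⟨0, by simpa only [pow_zero, one_mul] using sq_eq_sq_iff_eq_or_eq_neg.mp hsq⟩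

/-- If the multiplicative order `f` of `q` modulo `p` is even, then there
exists a natural number `w` such that `g(𝔮) = ±ζ_p^w·q^(f/2)`.

Setup: `O = ℤ[ζ_p]` is realized as the subalgebra of `ℂ` generated by a primitive `p`-th
root of unity `ζp`, `𝔮` is a (maximal) prime ideal of `O` above `q` with residue field
`O⧸𝔮` of cardinality `q^f` (`f` the order of `q` mod `p`), `χ` is the inverse of the
`p`-th power residue character mod `𝔮` and `ψ(x) = ζq^(Tr(x))`; the Gauss sum is
`g(𝔮) = gaussSum χ ψ = Σ_x χ(x)·ψ(x)`. -/
theorem stmt_10 (p q : ℕ) (hp : p.Prime) (hq : q.Prime)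
    (hoddp : Odd p) (hoddq : Odd q) (hpq : p ≠ q)
    (ζp ζq : ℂ) (hζp : IsPrimitiveRoot ζp p) (hζq : IsPrimitiveRoot ζq q)
    (O : Subalgebra ℤ ℂ) (hO : O = Algebra.adjoin ℤ {ζp})
    (zp : O) (hzp : (zp : ℂ) = ζp)
    (f : ℕ) (hford : f = orderOf (q : ZMod p))
    (𝔮 : Ideal O) (h𝔮max : 𝔮.IsMaximal) (h𝔮q : ((q : ℕ) : O) ∈ 𝔮)
    [Fintype (O ⧸ 𝔮)] (hcard : Fintype.card (O ⧸ 𝔮) = q ^ f)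
    [Algebra (ZMod q) (O ⧸ 𝔮)]
    (χ : MulChar (O ⧸ 𝔮) ℂ)
    (hχ : ∀ α : O, α ∉ 𝔮 → ∃ c : ℕ,
      χ (Ideal.Quotient.mk 𝔮 α) * ζp ^ c = 1 ∧
      α ^ ((q ^ f - 1) / p) - zp ^ c ∈ 𝔮)
    (ψ : AddChar (O ⧸ 𝔮) ℂ)
    (hψ : ∀ x : O ⧸ 𝔮, ψ x = ζq ^ (Algebra.trace (ZMod q) (O ⧸ 𝔮) x).val)
    (hfeven : Even f) :
    ∃ w : ℕ, gaussSum χ ψ = ζp ^ w * (q : ℂ) ^ (f / 2) ∨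
      gaussSum χ ψ = -(ζp ^ w * (q : ℂ) ^ (f / 2)) :=
  stmt_10_general p q hp hq hoddp ζp ζq hζp hζq O zp hzp f hford 𝔮 h𝔮max hcard χ hχ ψ hψ hfeven
end

section
/- Let 𝔮 be a non-principal prime ideal of ℤ[ζ_p] of inertial degree f above an odd prime q ≠ p with ideal class Cl(𝔮) ∈ C_p^−. Suppose p divides q^f − 1 exactly (p | q^f − 1 but p² ∤ q^f − 1), and let A be a singular primary number with A·ℤ[ζ_p] = 𝔮^p. Then A ≢ 1 mod π^{2p−1}. -/
/-!
If `A ≡ 1 mod π^(2p-1)`, then every Galois conjugate of `A` is too, since the conjugates of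
`ζ - 1` are associates of `ζ - 1`. Hence the norm `N(A) = ±(q^f)^p` is a rational integer
congruent to `1` modulo `π^(2p-1)`. Comparing ideal norms, `p^(2p-1)` divides
`|N(A) - 1|^(p-1)`, so `p^3 ∣ N(A) - 1`. But `p ∥ q^f - 1` gives `v_p((q^f)^p - 1) = 2` by
lifting the exponent, and `N(A) = -(q^f)^p` would force `p ∣ 2`.
-/

open NumberField Ideal
open scoped nonZeroDivisors

theorem Nat.Prime.pow_succ_dvd_of_pow_mul_add_one_dvd_pow {p m k e : ℕ} (hp : p.Prime)
    (h : p ^ (k * e + 1) ∣ m ^ k) : p ^ (e + 1) ∣ m := by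
  rcases eq_or_ne m 0 with rfl | hm
  · exact dvd_zero _
  rw [hp.pow_dvd_iff_le_factorization hm]
  rw [hp.pow_dvd_iff_le_factorization (pow_ne_zero k hm), Nat.factorization_pow] at h
  simp only [Finsupp.smul_apply, smul_eq_mul] at h
  by_contra! hlt
  nlinarith

theorem Nat.not_pow_three_dvd_pow_self_sub_one {p x : ℕ} [Fact p.Prime] (hodd : Odd p)
    (h1 : p ∣ x - 1) (h2 : ¬ p ^ 2 ∣ x - 1) : ¬ p ^ 3 ∣ x ^ p - 1 := by
  have hp : p.Prime := Fact.out
  have hx : 1 < x := by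
    by_contra hx
    exact h2 (by rw [Nat.sub_eq_zero_of_le (not_lt.mp hx)]; exact dvd_zero _)
  have hpx : ¬ p ∣ x := fun h ↦ hp.one_lt.ne'
    (Nat.dvd_one.mp (by simpa [Nat.sub_sub_self hx.le] using Nat.dvd_sub h h1))
  have hval : padicValNat p (x - 1) = 1 := by
    have hx0 : x - 1 ≠ 0 := by omega
    have := (padicValNat_dvd_iff_le (p := p) hx0 (n := 1)).mp (by simpa using h1)
    have := mt (padicValNat_dvd_iff_le (p := p) hx0 (n := 2)).mpr h2
    omega
  have hlte := padicValNat.pow_sub_pow (y := 1) hodd hx h1 hpx hp.ne_zero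
  rw [one_pow, hval, padicValNat_self] at hlte
  rw [padicValNat_dvd_iff_le (Nat.sub_ne_zero_of_lt (Nat.one_lt_pow hp.ne_zero hx)), hlte]
  omega

theorem Nat.not_pow_three_dvd_natAbs_sub_one {p x : ℕ} [Fact p.Prime] (hodd : Odd p)
    (h1 : p ∣ x - 1) (h2 : ¬ p ^ 2 ∣ x - 1) {N : ℤ} (hN : N.natAbs = x ^ p) :
    ¬ p ^ 3 ∣ (N - 1).natAbs := by
  have hp : p.Prime := Fact.out
  have hpow : p ∣ x ^ p - 1 := h1.trans (by simpa using Nat.sub_dvd_pow_sub_pow x 1 p)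
  have hxp : 1 ≤ x ^ p := Nat.one_le_pow _ _ <| Nat.pos_of_ne_zero fun hx ↦ h2 (by simp [hx])
  obtain hNpos | hNneg : (N - 1).natAbs = x ^ p - 1 ∨ (N - 1).natAbs = x ^ p + 1 := by omega
  · rw [hNpos]
    exact not_pow_three_dvd_pow_self_sub_one hodd h1 h2
  · rw [hNneg]
    intro h3
    have hp_dvd_two : p ∣ 2 := by
      have := Nat.dvd_sub ((dvd_pow_self p three_ne_zero).trans h3) hpow
      rwa [show x ^ p + 1 - (x ^ p - 1) = 2 by omega] at this
    have hp2 : p = 2 := le_antisymm (Nat.le_of_dvd two_pos hp_dvd_two) hp.two_le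
    exact absurd (hp2 ▸ hodd) (by decide)

theorem IsPrimitiveRoot.map_mem_span_sub_one_pow {A R : Type*} [CommRing A] [IsDomain A]
    [CommRing R] [Algebra R A] {ζ : A} {k : ℕ} [NeZero k] (hζ : IsPrimitiveRoot ζ k)
    (σ : A ≃ₐ[R] A) (n : ℕ) {y : A} (hy : y ∈ span {ζ - 1} ^ n) :
    σ y ∈ span {ζ - 1} ^ n := by
  have hmap : (span {ζ - 1} ^ n).map σ = span {ζ - 1} ^ n := by
    rw [Ideal.map_pow, Ideal.map_span, Set.image_singleton,
      span_singleton_eq_span_singleton.mpr (hζ.associated_sub_one_map_sub_one σ).symm]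
  exact hmap ▸ mem_map_of_mem σ hy

section Galois

variable {L : Type*} [Field L] [NumberField L] [IsGalois ℚ L]

theorem NumberField.RingOfIntegers.algebraMap_norm_eq_prod_galRestrict (x : 𝓞 L) :
    algebraMap ℤ (𝓞 L) (Algebra.norm ℤ x) = ∏ σ : Gal(L/ℚ), galRestrict ℤ ℚ L (𝓞 L) σ x := by
  apply RingOfIntegers.coe_injective
  rw [map_prod]
  simp only [algebraMap_galRestrict_apply]
  rw [← Algebra.norm_eq_prod_automorphisms, ← Algebra.coe_norm_int]
  simp

theorem NumberField.RingOfIntegers.algebraMap_norm_sub_one_mem {J : Ideal (𝓞 L)}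
    (hJ : ∀ σ : 𝓞 L ≃ₐ[ℤ] 𝓞 L, ∀ y ∈ J, σ y ∈ J) {x : 𝓞 L} (hx : x - 1 ∈ J) :
    algebraMap ℤ (𝓞 L) (Algebra.norm ℤ x) - 1 ∈ J := by
  rw [← Ideal.Quotient.eq, algebraMap_norm_eq_prod_galRestrict, map_prod, map_one]
  refine Finset.prod_eq_one fun σ _ ↦ ?_
  rw [← map_one (Ideal.Quotient.mk J), Ideal.Quotient.eq, ← map_one (galRestrict ℤ ℚ L (𝓞 L) σ),
    ← map_sub]
  exact hJ _ _ hx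

end Galois

theorem IsPrimitiveRoot.pow_dvd_natAbs_pow_of_intCast_mem {p : ℕ} [Fact p.Prime]
    {K : Type*} [Field K] [NumberField K] [IsCyclotomicExtension {p} ℚ K] {ζ : 𝓞 K}
    (hζ : IsPrimitiveRoot ζ p) {m : ℤ} {n : ℕ} (hm : (m : 𝓞 K) ∈ span {ζ - 1} ^ n) :
    p ^ n ∣ m.natAbs ^ (p - 1) := by
  have hζK : IsPrimitiveRoot (ζ : K) (p ^ (0 + 1)) := by
    simpa using hζ.map_of_injective RingOfIntegers.coe_injective
  have : IsCyclotomicExtension {p ^ (0 + 1)} ℚ K := by simpa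
  have hnorm : absNorm (span {ζ - 1}) = p :=
    IsCyclotomicExtension.Rat.absNorm_span_zeta_sub_one p 0 hζK
  have hle : span {(m.natAbs : 𝓞 K)} ≤ span {ζ - 1} ^ n := by
    have hassoc : Associated (m : 𝓞 K) (m.natAbs : 𝓞 K) := by
      simpa using (Int.associated_natAbs m).map (Int.castRingHom (𝓞 K))
    rwa [← span_singleton_eq_span_singleton.mpr hassoc, span_singleton_le_iff_mem]
  have hrank : Module.finrank ℤ (𝓞 K) = p - 1 := by
    rw [RingOfIntegers.rank, IsCyclotomicExtension.finrank K
      (Polynomial.cyclotomic.irreducible_rat (Fact.out : p.Prime).pos),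
      Nat.totient_prime Fact.out]
  simpa only [absNorm_span_natCast, hrank, map_pow, hnorm] using absNorm_dvd_absNorm_of_le hle

theorem stmt_11_general (p : ℕ) (hp : p.Prime) (hoddp : Odd p)
    (K : Type*) [Field K] [NumberField K]
    [IsCyclotomicExtension {p} ℚ K]
    (ζ : 𝓞 K) (hζ : IsPrimitiveRoot ζ p)
    (q : ℕ)
    (𝔮 : Ideal (𝓞 K))
    (f : ℕ) (hf : Nat.card (𝓞 K ⧸ 𝔮) = q ^ f)
    (hexact : p ∣ q ^ f - 1 ∧ ¬ p ^ 2 ∣ q ^ f - 1)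
    (A : 𝓞 K)
    (hAspan : Ideal.span {A} = 𝔮 ^ p) :
    A - 1 ∉ Ideal.span {ζ - 1} ^ (2 * p - 1) := by
  intro hmem
  have : Fact p.Prime := ⟨hp⟩
  have := IsCyclotomicExtension.isGalois {p} ℚ K
  have hnorm : (Algebra.norm ℤ A).natAbs = (q ^ f) ^ p := by
    rw [← absNorm_span_singleton, hAspan, map_pow, absNorm_apply, Submodule.cardQuot_apply, hf]
  have hnorm_mem : ((Algebra.norm ℤ A - 1 : ℤ) : 𝓞 K) ∈ span {ζ - 1} ^ (2 * p - 1) := by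
    simpa using RingOfIntegers.algebraMap_norm_sub_one_mem
      (fun σ _ ↦ hζ.map_mem_span_sub_one_pow σ _) hmem
  have hdvd := hζ.pow_dvd_natAbs_pow_of_intCast_mem hnorm_mem
  rw [show 2 * p - 1 = (p - 1) * 2 + 1 by have := hp.two_le; omega] at hdvd
  exact Nat.not_pow_three_dvd_natAbs_sub_one hoddp hexact.1 hexact.2 hnorm
    (hp.pow_succ_dvd_of_pow_mul_add_one_dvd_pow hdvd)

/-- Let `𝔮` be a non-principal prime ideal of `ℤ[ζ_p]` of inertial degree
`f` above an odd prime `q ≠ p` with `Cl(𝔮) ∈ C_p⁻`.  Suppose `p` divides `q^f - 1`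
exactly, and let `A` be a singular primary number with `A·ℤ[ζ_p] = 𝔮^p`.  Then
`A ≢ 1 mod π^(2p-1)`.

Membership of `Cl(𝔮)` in the relative `p`-class group `C_p⁻` is expressed by: the order
of `Cl(𝔮)` is a power of `p` (membership in the `p`-class group) and `Cl(𝔮)` is
annihilated by `1 + conj`, `conj` being complex conjugation (`ζ ↦ ζ^(p-1) = ζ⁻¹`); for
`p` odd this is exactly the kernel of the norm map to the class group of `K_p⁺`. -/
theorem stmt_11 (p : ℕ) (hp : p.Prime) (hoddp : Odd p)
    (K : Type*) [Field K] [NumberField K]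
    [IsCyclotomicExtension {p} ℚ K]
    (ζ : 𝓞 K) (hζ : IsPrimitiveRoot ζ p)
    (conj : 𝓞 K ≃ₐ[ℤ] 𝓞 K) (hconj : conj ζ = ζ ^ (p - 1))
    (q : ℕ) (hq : q.Prime) (hoddq : Odd q) (hqp : q ≠ p)
    (𝔮 : Ideal (𝓞 K)) (h𝔮prime : 𝔮.IsPrime) (h𝔮bot : 𝔮 ≠ ⊥)
    (h𝔮q : (q : 𝓞 K) ∈ 𝔮)
    (f : ℕ) (hf : Nat.card (𝓞 K ⧸ 𝔮) = q ^ f)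
    (h𝔮np : ¬ 𝔮.IsPrincipal)
    (hcl : ∀ I J : (Ideal (𝓞 K))⁰, (I : Ideal (𝓞 K)) = 𝔮 →
      (J : Ideal (𝓞 K)) = Ideal.map conj 𝔮 →
      (∃ k : ℕ, orderOf (ClassGroup.mk0 I) = p ^ k) ∧
        ClassGroup.mk0 I * ClassGroup.mk0 J = 1)
    (hexact : p ∣ q ^ f - 1 ∧ ¬ p ^ 2 ∣ q ^ f - 1)
    (A : 𝓞 K) (hA0 : A ≠ 0)
    (hAnp : ¬ ∃ B : K, B ^ p = algebraMap (𝓞 K) K A)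
    (hAspan : Ideal.span {A} = 𝔮 ^ p)
    (hAprim : ∃ a : ℤ, ¬ (p : ℤ) ∣ a ∧ A - (a : 𝓞 K) ^ p ∈ Ideal.span {ζ - 1} ^ p) :
    A - 1 ∉ Ideal.span {ζ - 1} ^ (2 * p - 1) :=
  stmt_11_general p hp hoddp K ζ hζ q 𝔮 f hf hexact A hAspan
end
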